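/- Let G be a graph, v a fresh vertex, and suppose v is inserted with edges to a set N(v) ⊆ V(G). Fix k ≥ 2 and let H ⊆ G[N(v)] be a subgraph such that every edge e of H has trussness τ_G(e) ≥ k and every vertex u of H has degree at least k−2 in H. Then in the new graph G' = G ∪ ({v}, {(v,w) : w ∈ V(H)} ∪ further edges of E(v)), every new edge (v,w) with w ∈ V(H) has trussness τ_{G'}((v,w)) ≥ k. (Lower-bound direction of Lemma 1.) -/

import Mathlib

/-!
A single `k`-truss `K` of `G` contains every edge of `H`: take the union of witnesses for the
individual edges, since a union of `k`-trusses is a `k`-truss. Adding the apex `v` joined to all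
of `V(H)` keeps it a `k`-truss: the old edges only gain triangles, and a new edge `(v, w)` lies
in a triangle `v w u` for each of the at least `k - 2` neighbours `u` of `w` in `H`.
-/

open SimpleGraph

/-- Support of an edge (u,v) in a subgraph K: number of common neighbors of u and v in K. -/
noncomputable def esupp {V : Type*} {G : SimpleGraph V} (K : G.Subgraph) (u v : V) : ℕ :=
  {w | K.Adj u w ∧ K.Adj v w}.ncard

/-- K is a k-truss: every edge of K is contained in at least k-2 triangles within K. -/
def IsKTruss {V : Type*} {G : SimpleGraph V} (K : G.Subgraph) (k : ℕ) : Prop :=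
  ∀ u v, K.Adj u v → k - 2 ≤ esupp K u v

/-- Trussness of edge (u,v) in G: the largest k such that some k-truss of G contains (u,v). -/
noncomputable def tr {V : Type*} (G : SimpleGraph V) (u v : V) : ℕ :=
  sSup {k | ∃ K : G.Subgraph, K.Adj u v ∧ IsKTruss K k}

/-- Support of an edge (u,v) in a graph G. -/
noncomputable def gsupp {V : Type*} (G : SimpleGraph V) (u v : V) : ℕ :=
  {w | G.Adj u w ∧ G.Adj v w}.ncard

section Support

variable {V : Type*} {G₁ G₂ : SimpleGraph V}

lemma esupp_mono [Finite V] {K₁ : G₁.Subgraph} {K₂ : G₂.Subgraph}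
    (h : ∀ x y, K₁.Adj x y → K₂.Adj x y) (u v : V) : esupp K₁ u v ≤ esupp K₂ u v :=
  Set.ncard_le_ncard (fun _ hw => ⟨h _ _ hw.1, h _ _ hw.2⟩) (Set.toFinite _)

lemma esupp_comm (K : G₁.Subgraph) (u v : V) : esupp K u v = esupp K v u := by
  simp only [esupp, and_comm]

lemma esupp_le_card [Finite V] (K : G₁.Subgraph) (u v : V) : esupp K u v ≤ Nat.card V :=
  Set.ncard_le_card _

end Support

section Truss

variable {V : Type*} {G : SimpleGraph V} {k : ℕ}

lemma IsKTruss.anti {K : G.Subgraph} {j : ℕ} (hK : IsKTruss K k) (hjk : j ≤ k) :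
    IsKTruss K j :=
  fun u v huv => (Nat.sub_le_sub_right hjk 2).trans (hK u v huv)

lemma IsKTruss.iSup [Finite V] {ι : Type*} {K : ι → G.Subgraph} (hK : ∀ i, IsKTruss (K i) k) :
    IsKTruss (⨆ i, K i) k := by
  intro u v huv
  obtain ⟨i, hi⟩ := Subgraph.iSup_adj.1 huv
  exact (hK i u v hi).trans
    (esupp_mono (fun _ _ h => Subgraph.iSup_adj.2 ⟨i, h⟩) u v)

lemma isKTruss_top_zero : IsKTruss (⊤ : G.Subgraph) 0 :=
  fun _ _ _ => Nat.zero_le _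

lemma tr_bddAbove [Finite V] (u v : V) :
    BddAbove {k | ∃ K : G.Subgraph, K.Adj u v ∧ IsKTruss K k} :=
  ⟨Nat.card V + 2, fun k ⟨K, huv, hK⟩ => by
    have := (hK u v huv).trans (esupp_le_card K u v)
    omega⟩

lemma le_tr [Finite V] {K : G.Subgraph} {u v : V} (huv : K.Adj u v) (hK : IsKTruss K k) :
    k ≤ tr G u v :=
  le_csSup (tr_bddAbove u v) ⟨K, huv, hK⟩

lemma exists_isKTruss_of_le_tr [Finite V] {u v : V} (huv : G.Adj u v) (hk : k ≤ tr G u v) :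
    ∃ K : G.Subgraph, K.Adj u v ∧ IsKTruss K k := by
  have hne : {k | ∃ K : G.Subgraph, K.Adj u v ∧ IsKTruss K k}.Nonempty :=
    ⟨0, ⊤, huv, isKTruss_top_zero⟩
  obtain ⟨K, hKuv, hK⟩ := Nat.sSup_mem hne (tr_bddAbove u v)
  exact ⟨K, hKuv, hK.anti hk⟩

lemma exists_isKTruss_of_forall_le_tr [Finite V] (H : G.Subgraph)
    (hH : ∀ x y, H.Adj x y → k ≤ tr G x y) :
    ∃ K : G.Subgraph, IsKTruss K k ∧ ∀ x y, H.Adj x y → K.Adj x y := by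
  choose K hKadj hK using fun e : {p : V × V // H.Adj p.1 p.2} =>
    exists_isKTruss_of_le_tr (H.adj_sub e.2) (hH _ _ e.2)
  exact ⟨⨆ e, K e, IsKTruss.iSup hK,
    fun x y hxy => Subgraph.iSup_adj.2 ⟨⟨(x, y), hxy⟩, hKadj _⟩⟩

end Truss

section Apex

variable {V : Type*} {G G' Γ : SimpleGraph V}

def SimpleGraph.Subgraph.addApex (K : G.Subgraph) (hG : G ≤ G') (H : Γ.Subgraph) (v : V)
    (hv : ∀ w ∈ H.verts, G'.Adj v w) : G'.Subgraph where
  verts := Set.univ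
  Adj x y := K.Adj x y ∨ (x = v ∧ y ∈ H.verts) ∨ (y = v ∧ x ∈ H.verts)
  adj_sub := by
    rintro x y (h | ⟨rfl, hy⟩ | ⟨rfl, hx⟩)
    · exact hG (K.adj_sub h)
    · exact hv y hy
    · exact (hv x hx).symm
  edge_vert _ := Set.mem_univ _
  symm := ⟨by
    rintro x y (h | h | h)
    · exact Or.inl h.symm
    · exact Or.inr (Or.inr h)
    · exact Or.inr (Or.inl h)⟩

variable {K : G.Subgraph} {hG : G ≤ G'} {H : Γ.Subgraph} {v : V}
  {hv : ∀ w ∈ H.verts, G'.Adj v w}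

lemma SimpleGraph.Subgraph.addApex_adj_apex {w : V} (hw : w ∈ H.verts) :
    (K.addApex hG H v hv).Adj v w :=
  Or.inr (Or.inl ⟨rfl, hw⟩)

lemma SimpleGraph.Subgraph.esupp_addApex_apex [Finite V]
    (hHK : ∀ x y, H.Adj x y → K.Adj x y) {w : V} :
    (H.neighborSet w).ncard ≤ esupp (K.addApex hG H v hv) v w :=
  Set.ncard_le_ncard
    (fun u hu => ⟨addApex_adj_apex (H.edge_vert hu.symm), Or.inl (hHK w u hu)⟩)
    (Set.toFinite _)

lemma IsKTruss.addApex [Finite V] {k : ℕ} (hK : IsKTruss K k)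
    (hHK : ∀ x y, H.Adj x y → K.Adj x y)
    (hdeg : ∀ u ∈ H.verts, k - 2 ≤ (H.neighborSet u).ncard) :
    IsKTruss (K.addApex hG H v hv) k := by
  rintro x y (h | ⟨rfl, hy⟩ | ⟨rfl, hx⟩)
  · exact (hK x y h).trans (esupp_mono (fun _ _ => Or.inl) x y)
  · exact (hdeg y hy).trans (Subgraph.esupp_addApex_apex hHK)
  · rw [esupp_comm]
    exact (hdeg x hx).trans (Subgraph.esupp_addApex_apex hHK)

end Apex

theorem stmt8_general {V : Type*} [Fintype V] (G G' : SimpleGraph V) (v : V) (N : Set V)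
    (hG' : ∀ x y, G'.Adj x y ↔ G.Adj x y ∨ (x = v ∧ y ∈ N) ∨ (y = v ∧ x ∈ N))
    (k : ℕ) (H : G.Subgraph) (hHN : H.verts ⊆ N)
    (hedge : ∀ x y, H.Adj x y → k ≤ tr G x y)
    (hdeg : ∀ u ∈ H.verts, k - 2 ≤ (H.neighborSet u).ncard) :
    ∀ w ∈ H.verts, k ≤ tr G' v w := by
  intro w hw
  obtain ⟨K, hK, hHK⟩ := exists_isKTruss_of_forall_le_tr H hedge
  have hG : G ≤ G' := fun x y h => (hG' x y).2 (Or.inl h)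
  have hv : ∀ w ∈ H.verts, G'.Adj v w :=
    fun w hw => (hG' v w).2 (Or.inr (Or.inl ⟨rfl, hHN hw⟩))
  exact le_tr (K := K.addApex hG H v hv) (Subgraph.addApex_adj_apex hw) (hK.addApex hHK hdeg)

/-- lower bound of Lemma 1: if H ⊆ G[N(v)] has all edges of trussness
≥ k in G and all vertices of degree ≥ k-2 in H, then after inserting the fresh vertex
v with edges to N, every new edge (v,w) with w ∈ V(H) has trussness ≥ k. -/
theorem stmt8 {V : Type*} [Fintype V] (G G' : SimpleGraph V) (v : V) (N : Set V)
    (hvN : v ∉ N) (hIso : ∀ w, ¬ G.Adj v w)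
    (hG' : ∀ x y, G'.Adj x y ↔ G.Adj x y ∨ (x = v ∧ y ∈ N) ∨ (y = v ∧ x ∈ N))
    (k : ℕ) (hk : 2 ≤ k) (H : G.Subgraph) (hHN : H.verts ⊆ N)
    (hedge : ∀ x y, H.Adj x y → k ≤ tr G x y)
    (hdeg : ∀ u ∈ H.verts, k - 2 ≤ (H.neighborSet u).ncard) :
    ∀ w ∈ H.verts, k ≤ tr G' v w :=
  stmt8_general G G' v N hG' k H hHN hedge hdeg
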